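/- arXiv:2405.13682 — 6 statements merged into one kernel-verified Lean document; each statement's English description precedes it below -/
import Mathlib

section
/- Let G be a locally compact group, X and Ξ G-spaces with G-invariant measures, Y a separable Hilbert space with a unitary representation μ : G → U(Y), and φ : X × Ξ → Y a joint-G-equivariant feature map. Define the joint-equivariant machine S_φ[γ](x) := ∫_Ξ γ(ξ) φ(x,ξ) dξ (Bochner integral) for γ : Ξ → ℂ, the representation π_g[f](x) := μ_g(f(g⁻¹·x)) on L²(X;Y), and the representation π̂_g[γ](ξ) := γ(g⁻¹·ξ) on L²(Ξ). Then S_φ intertwines π̂ and π: for every g ∈ G and γ for which the integrals are defined, S_φ[π̂_g[γ]] = π_g[S_φ[γ]]. -/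
open MeasureTheory

theorem MeasureTheory.integral_comp_smul_of_measurePreserving {G α E : Type*} [Group G]
    [MulAction G α] [MeasurableSpace α] [NormedAddCommGroup E] [NormedSpace ℝ E]
    {μ : Measure α} (hμ : ∀ g : G, MeasurePreserving (fun x : α => g • x) μ μ)
    (f : α → E) (g : G) :
    ∫ x, f (g • x) ∂μ = ∫ x, f x ∂μ := by
  have : MeasurableConstSMul G α := ⟨fun c => (hμ c).measurable⟩
  have : SMulInvariantMeasure G α μ :=
    ⟨fun c _ hs => (hμ c).measure_preimage hs.nullMeasurableSet⟩
  exact integral_smul_eq_self f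

theorem statement4_general
    {G X Ξ Y : Type*} [Group G]
    [MulAction G X]
    [MeasurableSpace Ξ] [MulAction G Ξ]
    (μΞ : Measure Ξ)
    (hμΞ : ∀ g : G, MeasurePreserving (fun ξ : Ξ => g • ξ) μΞ μΞ)
    [NormedAddCommGroup Y] [InnerProductSpace ℂ Y]
    (ρ : G →* (Y ≃ₗᵢ[ℂ] Y))
    (φ : X → Ξ → Y)
    (hφ : ∀ (g : G) (x : X) (ξ : Ξ), φ (g • x) (g • ξ) = ρ g (φ x ξ))
    (S : (Ξ → ℂ) → X → Y)
    (hS : ∀ (γ : Ξ → ℂ) (x : X), S γ x = ∫ ξ, γ ξ • φ x ξ ∂μΞ)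
    (g : G) (γ : Ξ → ℂ) :
    ∀ x : X, S (fun ξ => γ (g⁻¹ • ξ)) x = ρ g (S γ (g⁻¹ • x)) := by
  intro x
  have integrand_comp_smul (ξ : Ξ) :
      γ (g⁻¹ • g • ξ) • φ x (g • ξ) = ρ g (γ ξ • φ (g⁻¹ • x) ξ) := by
    rw [inv_smul_smul, map_smul, ← hφ, smul_inv_smul]
  calc S (fun ξ => γ (g⁻¹ • ξ)) x
      = ∫ ξ, γ (g⁻¹ • g • ξ) • φ x (g • ξ) ∂μΞ := by
        rw [hS, ← integral_comp_smul_of_measurePreserving hμΞ _ g]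
    _ = ∫ ξ, ρ g (γ ξ • φ (g⁻¹ • x) ξ) ∂μΞ := by simp only [integrand_comp_smul]
    _ = ρ g (S γ (g⁻¹ • x)) := by
        rw [hS]
        -- no integrability needed: both sides are junk `0` together, as `ρ g` is an isomorphism
        exact (ρ g).toContinuousLinearEquiv.integral_comp_comm _

/-- Let `G` be a locally compact group, `X` and `Ξ` `G`-spaces with
`G`-invariant measures, `Y` a separable Hilbert space with a unitary representation
`ρ : G → U(Y)`, and `φ : X × Ξ → Y` a joint-`G`-equivariant feature map.  The
joint-equivariant machine `S_φ[γ](x) := ∫_Ξ γ(ξ) • φ(x,ξ) dξ` intertwines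
`π̂_g[γ](ξ) = γ(g⁻¹ • ξ)` and `π_g[f](x) = ρ_g (f (g⁻¹ • x))`:
`S_φ[π̂_g γ] = π_g[S_φ γ]`. -/
theorem statement4
    {G X Ξ Y : Type*} [Group G] [TopologicalSpace G] [IsTopologicalGroup G]
    [LocallyCompactSpace G]
    [MeasurableSpace X] [MulAction G X]
    [MeasurableSpace Ξ] [MulAction G Ξ]
    (μX : Measure X) (μΞ : Measure Ξ)
    (hμX : ∀ g : G, MeasurePreserving (fun x : X => g • x) μX μX)
    (hμΞ : ∀ g : G, MeasurePreserving (fun ξ : Ξ => g • ξ) μΞ μΞ)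
    [NormedAddCommGroup Y] [InnerProductSpace ℂ Y] [CompleteSpace Y]
    [TopologicalSpace.SeparableSpace Y]
    (ρ : G →* (Y ≃ₗᵢ[ℂ] Y))
    (φ : X → Ξ → Y)
    (hφ : ∀ (g : G) (x : X) (ξ : Ξ), φ (g • x) (g • ξ) = ρ g (φ x ξ))
    (S : (Ξ → ℂ) → X → Y)
    (hS : ∀ (γ : Ξ → ℂ) (x : X), S γ x = ∫ ξ, γ ξ • φ x ξ ∂μΞ)
    (g : G) (γ : Ξ → ℂ)
    (hint : ∀ x : X, Integrable (fun ξ => γ ξ • φ x ξ) μΞ) :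
    ∀ x : X, S (fun ξ => γ (g⁻¹ • ξ)) x = ρ g (S γ (g⁻¹ • x)) :=
  statement4_general μΞ hμΞ ρ φ hφ S hS g γ
end

section
/- Let G be a locally compact group, X₀, …, Xₙ G-spaces with the data domain X := X₀ carrying a G-invariant measure, Ξ₁, …, Ξₙ G-spaces with G-invariant measures, and Y := Xₙ a separable Hilbert space with a unitary representation μ : G → U(Y). Let φᵢ, ψᵢ : X_{i−1} × Ξᵢ → Xᵢ be joint-G-equivariant feature maps, Ξ_{1:n} := Ξ₁ × ⋯ × Ξₙ with component-wise G-action and product measure, and φ_{1:n}(x, ξ_{1:n}) := φₙ(·, ξₙ) ∘ ⋯ ∘ φ₁(x, ξ₁) (similarly ψ_{1:n}). Define the deep machine S[γ](x) := ∫_{Ξ_{1:n}} γ(ξ_{1:n}) φ_{1:n}(x, ξ_{1:n}) dξ_{1:n} and the deep ridgelet transform R[f](ξ_{1:n}) := ∫_X ⟨f(x), ψ_{1:n}(x, ξ_{1:n})⟩_Y dx. Assume S ∘ R is a well-defined bounded linear operator on L²(X;Y) and the representation π_g[f](x) := μ_g(f(g⁻¹·x)) on L²(X;Y) is irreducible.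 Then there exists a constant C ∈ ℂ such that S[R[f]] = C · f for every f ∈ L²(X;Y). -/
/-!
The deep machine `S` and the deep ridgelet transform `R` are built from jointly equivariant
feature maps integrated against invariant measures, so `R[π_g f](ξ) = R[f](g⁻¹ • ξ)` and
`S[γ(g⁻¹ • ·)] = π_g S[γ]`: the operator `S ∘ R` commutes with the representation `π`.
By Schur's lemma for the irreducible unitary representation `π` it is then a scalar. Schur's
lemma is proved with the continuous functional calculus: a normal operator `B` in the commutant
whose spectrum contains two points `a ≠ b` yields `P = f(B)` and `Q = g(B)` in the commutant,
with bumps `f`, `g` at `a`, `b` of disjoint support, so `P, Q ≠ 0` and `Q P = 0`; the closure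
of the range of `P` is then a nontrivial closed invariant subspace.
-/

open MeasureTheory ComplexStarModule
open scoped InnerProductSpace

lemma exists_continuous_mul_eq_zero_of_ne {X : Type*} [MetricSpace X] {a b : X} (hab : a ≠ b) :
    ∃ f g : X → ℂ, Continuous f ∧ Continuous g ∧ f a ≠ 0 ∧ g b ≠ 0 ∧ ∀ z, f z * g z = 0 := by
  set r := dist a b / 2 with hr_def
  have hr : 0 < r := half_pos (dist_pos.mpr hab)
  let bump (c : X) (z : X) : ℂ := ((max (r - dist z c) 0 : ℝ) : ℂ)
  have hbump_cont (c : X) : Continuous (bump c) := by fun_prop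
  have hbump_self (c : X) : bump c c ≠ 0 := by simp [bump, hr]
  refine ⟨bump a, bump b, hbump_cont a, hbump_cont b, hbump_self a, hbump_self b, fun z => ?_⟩
  have hfar : r ≤ dist z a ∨ r ≤ dist z b := by
    by_contra! h
    linarith [h.1, h.2, dist_triangle_left a b z, hr_def]
  rcases hfar with h | h <;> simp [bump, h]

lemma exists_cfc_mul_eq_zero_of_not_subsingleton_spectrum {A : Type*} [CStarAlgebra A] (a : A)
    [IsStarNormal a] (ha : ¬ (spectrum ℂ a).Subsingleton) :
    ∃ f g : ℂ → ℂ, cfc f a ≠ 0 ∧ cfc g a ≠ 0 ∧ cfc g a * cfc f a = 0 := by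
  obtain ⟨x, hx, y, hy, hxy⟩ := Set.not_subsingleton_iff.mp ha
  obtain ⟨f, g, hf, hg, hfx, hgy, hfg⟩ := exists_continuous_mul_eq_zero_of_ne hxy
  have cfc_ne_zero {h : ℂ → ℂ} (hh : Continuous h) {z : ℂ} (hz : z ∈ spectrum ℂ a)
      (hhz : h z ≠ 0) : cfc h a ≠ 0 :=
    fun h0 => hhz (eqOn_of_cfc_eq_cfc (h0.trans (cfc_zero ℂ a).symm) hh.continuousOn
      continuousOn_const inferInstance hz)
  refine ⟨f, g, cfc_ne_zero hf hx hfx, cfc_ne_zero hg hy hgy, ?_⟩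
  rw [← cfc_mul g f a, funext fun z => (mul_comm (g z) (f z)).trans (hfg z), cfc_const_zero]

section Schur

variable {H : Type*} [NormedAddCommGroup H] [InnerProductSpace ℂ H] [CompleteSpace H]
  {ι : Type*}

def IsTopologicallyIrreducible (U : ι → H ≃ₗᵢ[ℂ] H) : Prop :=
  ∀ V : Submodule ℂ H, IsClosed (V : Set H) → (∀ i f, f ∈ V → U i f ∈ V) → V = ⊥ ∨ V = ⊤

noncomputable abbrev commutant (U : ι → H ≃ₗᵢ[ℂ] H) : StarSubalgebra ℂ (H →L[ℂ] H) :=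
  StarSubalgebra.centralizer ℂ (Set.range fun i => (U i : H →L[ℂ] H))

lemma isClosed_commutant (U : ι → H ≃ₗᵢ[ℂ] H) : IsClosed (commutant U : Set (H →L[ℂ] H)) :=
  Set.isClosed_centralizer _

variable {U : ι → H ≃ₗᵢ[ℂ] H}

lemma mem_commutant_iff {T : H →L[ℂ] H} : T ∈ commutant U ↔ ∀ i f, T (U i f) = U i (T f) := by
  simp only [StarSubalgebra.mem_centralizer_iff, Set.forall_mem_range,
    LinearIsometryEquiv.star_eq_symm]
  refine forall_congr' fun i => ⟨fun h f => congr($(h.1.symm) f),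
    fun hT => ⟨ContinuousLinearMap.ext fun f => (hT f).symm, ContinuousLinearMap.ext fun f => ?_⟩⟩
  change (U i).symm (T f) = T ((U i).symm f)
  rw [(U i).symm_apply_eq, ← hT, (U i).apply_symm_apply]

namespace IsTopologicallyIrreducible

variable (hU : IsTopologicallyIrreducible U)
include hU

lemma eq_zero_of_mul_eq_zero {P Q : H →L[ℂ] H} (hP : P ∈ commutant U) (hP0 : P ≠ 0)
    (hQP : Q * P = 0) : Q = 0 := by
  set V := (LinearMap.range (P : H →ₗ[ℂ] H)).topologicalClosure
  have hV : IsClosed (V : Set H) := Submodule.isClosed_topologicalClosure _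
  have hPV : ∀ x, P x ∈ V := fun x => Submodule.le_topologicalClosure _ ⟨x, rfl⟩
  have hV_inv : ∀ i f, f ∈ V → U i f ∈ V := fun i =>
    Submodule.topologicalClosure_minimal (t := V.comap (U i).toLinearEquiv.toLinearMap) _
      (by rintro _ ⟨x, rfl⟩; simpa [mem_commutant_iff.mp hP] using hPV (U i x))
      (hV.preimage (U i).continuous)
  rcases hU V hV hV_inv with hbot | htop
  · exact absurd (ContinuousLinearMap.ext fun x => by simpa [hbot] using hPV x) hP0
  · have hker : V ≤ LinearMap.ker (Q : H →ₗ[ℂ] H) :=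
      Submodule.topologicalClosure_minimal _
        (by rintro _ ⟨x, rfl⟩; exact congr($hQP x)) (Q.isClosed_ker)
    ext f
    exact hker (htop ▸ Submodule.mem_top)

lemma spectrum_subsingleton {a : H →L[ℂ] H} (ha : a ∈ commutant U) [IsStarNormal a] :
    (spectrum ℂ a).Subsingleton := by
  by_contra hs
  obtain ⟨f, g, hf, hg, hgf⟩ := exists_cfc_mul_eq_zero_of_not_subsingleton_spectrum a hs
  have := isClosed_commutant U
  exact hg (hU.eq_zero_of_mul_eq_zero (cfc_mem f ha) hf hgf)

lemma exists_eq_algebraMap [Nontrivial H] {a : H →L[ℂ] H} (ha : a ∈ commutant U)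
    [IsStarNormal a] : ∃ c : ℂ, a = algebraMap ℂ _ c := by
  obtain ⟨c, hc⟩ := spectrum.nonempty (A := H →L[ℂ] H) a
  exact ⟨c, CFC.eq_algebraMap_of_spectrum_subset_singleton a c
    fun z hz => hU.spectrum_subsingleton ha hz hc⟩

theorem exists_eq_smul {T : H →L[ℂ] H} (hT : T ∈ commutant U) : ∃ c : ℂ, ∀ f, T f = c • f := by
  rcases subsingleton_or_nontrivial H with _ | _
  · exact ⟨0, fun f => Subsingleton.elim _ _⟩
  have hre : (ℜ T : H →L[ℂ] H) ∈ commutant U := by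
    rw [realPart_apply_coe, RCLike.real_smul_eq_coe_smul (K := ℂ)]
    exact (commutant U).smul_mem (add_mem hT (star_mem hT)) _
  have him : (ℑ T : H →L[ℂ] H) ∈ commutant U := by
    rw [imaginaryPart_apply_coe, RCLike.real_smul_eq_coe_smul (K := ℂ)]
    exact (commutant U).smul_mem ((commutant U).smul_mem (sub_mem hT (star_mem hT)) _) _
  obtain ⟨c₁, h₁⟩ := hU.exists_eq_algebraMap hre
  obtain ⟨c₂, h₂⟩ := hU.exists_eq_algebraMap him
  refine ⟨c₁ + Complex.I * c₂, fun f => ?_⟩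
  conv_lhs => rw [← realPart_add_I_smul_imaginaryPart T, h₁, h₂]
  simp [add_smul, mul_smul]

end IsTopologicallyIrreducible

end Schur

lemma composite_smul_smul {G : Type*} {n : ℕ} {Xs Ξs : ℕ → Type*} [∀ i, SMul G (Xs i)]
    [∀ i, SMul G (Ξs i)] {φ : ∀ i : ℕ, Xs i → Ξs i → Xs (i + 1)}
    (hφ : ∀ (i : ℕ) (g : G) (x : Xs i) (ξ : Ξs i), φ i (g • x) (g • ξ) = g • φ i x ξ)
    {Φ : ∀ k : ℕ, Xs 0 → (∀ i : Fin n, Ξs i) → Xs k} (hΦ0 : ∀ x ξ, Φ 0 x ξ = x)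
    (hΦs : ∀ (k : ℕ) (hk : k < n) x ξ, Φ (k + 1) x ξ = φ k (Φ k x ξ) (ξ ⟨k, hk⟩))
    (g : G) {k : ℕ} (hk : k ≤ n) (x : Xs 0) (ξ : ∀ i : Fin n, Ξs i) :
    Φ k (g • x) (g • ξ) = g • Φ k x ξ := by
  induction k with
  | zero => rw [hΦ0, hΦ0]
  | succ k ih =>
    rw [hΦs k hk, hΦs k hk, ih (Nat.le_of_succ_le hk), Pi.smul_apply, hφ]

lemma smulInvariantMeasure_of_measurePreserving {M α : Type*} [SMul M α] [MeasurableSpace α]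
    {μ : Measure α} (h : ∀ c : M, MeasurePreserving (c • ·) μ μ) : SMulInvariantMeasure M α μ :=
  ⟨fun c _ hs => (h c).measure_preimage hs.nullMeasurableSet⟩

section DeepRidgelet

variable {G X Ξ Y : Type*} [Group G] [MulAction G X] [MulAction G Ξ]
  [NormedAddCommGroup Y] [InnerProductSpace ℂ Y] {Φ Ψ : X → Ξ → Y} {g : G}

-- `ridgelet μ Ψ` and `machine ν Φ` are the paper's `R` and `S`, with `Ξ = Ξ₁ × ⋯ × Ξₙ`.
noncomputable def ridgelet [MeasurableSpace X] (μ : Measure X) (Ψ : X → Ξ → Y) (f : X → Y)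
    (ξ : Ξ) : ℂ :=
  ∫ x, ⟪f x, Ψ x ξ⟫_ℂ ∂μ

noncomputable def machine [MeasurableSpace Ξ] (ν : Measure Ξ) (Φ : X → Ξ → Y) (γ : Ξ → ℂ)
    (x : X) : Y :=
  ∫ ξ, γ ξ • Φ x ξ ∂ν

lemma ridgelet_map_comp_smul_inv [MeasurableSpace X] [MeasurableConstSMul G X] {μ : Measure X}
    [SMulInvariantMeasure G X μ] (L : Y →ₗᵢ[ℂ] Y) (hΨ : ∀ x ξ, Ψ (g • x) (g • ξ) = L (Ψ x ξ))
    (f : X → Y) (ξ : Ξ) :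
    ridgelet μ Ψ (fun x => L (f (g⁻¹ • x))) ξ = ridgelet μ Ψ f (g⁻¹ • ξ) := by
  unfold ridgelet
  rw [← integral_smul_eq_self (μ := μ) _ (g := g)]
  congr 1 with x
  have hΨx : Ψ (g • x) ξ = L (Ψ x (g⁻¹ • ξ)) := by rw [← hΨ, smul_inv_smul]
  dsimp only
  rw [inv_smul_smul, hΨx, L.inner_map_map]

lemma machine_comp_smul_inv [CompleteSpace Y] [MeasurableSpace Ξ] [MeasurableConstSMul G Ξ]
    {ν : Measure Ξ} [SMulInvariantMeasure G Ξ ν] (L : Y →ₗᵢ[ℂ] Y)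
    (hΦ : ∀ x ξ, Φ (g • x) (g • ξ) = L (Φ x ξ)) (γ : Ξ → ℂ) (x : X) :
    machine ν Φ (fun ξ => γ (g⁻¹ • ξ)) x = L (machine ν Φ γ (g⁻¹ • x)) := by
  unfold machine
  rw [← integral_smul_eq_self (μ := ν) _ (g := g), ← L.integral_comp_comm]
  congr 1 with ξ
  have hΦξ : Φ x (g • ξ) = L (Φ (g⁻¹ • x) ξ) := by rw [← hΦ, smul_inv_smul]
  dsimp only
  rw [inv_smul_smul, hΦξ, map_smul]

lemma comm_of_ae_eq_machine_ridgelet [CompleteSpace Y] [MeasurableSpace X] [MeasurableSpace Ξ]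
    [MeasurableConstSMul G X] [MeasurableConstSMul G Ξ] {μ : Measure X} {ν : Measure Ξ}
    [SMulInvariantMeasure G X μ] [SMulInvariantMeasure G Ξ ν]
    (L : Y →ₗᵢ[ℂ] Y) (hΦ : ∀ x ξ, Φ (g • x) (g • ξ) = L (Φ x ξ))
    (hΨ : ∀ x ξ, Ψ (g • x) (g • ξ) = L (Ψ x ξ)) (T : Lp Y 2 μ → Lp Y 2 μ)
    (hT : ∀ f : Lp Y 2 μ, ⇑(T f) =ᵐ[μ] machine ν Φ (ridgelet μ Ψ f))
    (P : Lp Y 2 μ → Lp Y 2 μ) (hP : ∀ f : Lp Y 2 μ, ⇑(P f) =ᵐ[μ] fun x => L (f (g⁻¹ • x)))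
    (f : Lp Y 2 μ) : T (P f) = P (T f) := by
  have hR : ridgelet μ Ψ (P f) = fun ξ => ridgelet μ Ψ f (g⁻¹ • ξ) := funext fun ξ =>
    (integral_congr_ae ((hP f).mono fun x hx => by rw [hx])).trans
      (ridgelet_map_comp_smul_inv L hΨ f ξ)
  refine Lp.ext ?_
  calc ⇑(T (P f)) =ᵐ[μ] machine ν Φ (ridgelet μ Ψ (P f)) := hT _
    _ = fun x => L (machine ν Φ (ridgelet μ Ψ f) (g⁻¹ • x)) := by
      rw [hR]; exact funext (machine_comp_smul_inv L hΦ _)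
    _ =ᵐ[μ] fun x => L (T f (g⁻¹ • x)) :=
      ((measurePreserving_smul g⁻¹ μ).quasiMeasurePreserving.ae_eq_comp (hT f).symm).fun_comp L
    _ =ᵐ[μ] P (T f) := (hP _).symm

end DeepRidgelet

theorem statement7_general
    {G : Type*} [Group G]
    (n : ℕ) (Xs : ℕ → Type*) (Ξs : ℕ → Type*)
    [∀ i, MulAction G (Xs i)] [∀ i, MulAction G (Ξs i)]
    [MeasurableSpace (Xs 0)] (μX : Measure (Xs 0))
    (hμX : ∀ g : G, MeasurePreserving (fun x : Xs 0 => g • x) μX μX)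
    [∀ i, MeasurableSpace (Ξs i)] (μΞ : ∀ i, Measure (Ξs i))
    [∀ i, SigmaFinite (μΞ i)]
    (hμΞ : ∀ (i : ℕ) (g : G), MeasurePreserving (fun ξ : Ξs i => g • ξ) (μΞ i) (μΞ i))
    [NormedAddCommGroup (Xs n)] [InnerProductSpace ℂ (Xs n)] [CompleteSpace (Xs n)]
    (ρ : G →* (Xs n ≃ₗᵢ[ℂ] Xs n))
    (hρ : ∀ (g : G) (y : Xs n), g • y = ρ g y)
    (φ ψ : ∀ i : ℕ, Xs i → Ξs i → Xs (i + 1))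
    (hφ : ∀ (i : ℕ) (g : G) (x : Xs i) (ξ : Ξs i), φ i (g • x) (g • ξ) = g • φ i x ξ)
    (hψ : ∀ (i : ℕ) (g : G) (x : Xs i) (ξ : Ξs i), ψ i (g • x) (g • ξ) = g • ψ i x ξ)
    -- the depth-n compositions `Φ = φ_{1:n}` and `Ψ = ψ_{1:n}`
    (Φ Ψ : ∀ k : ℕ, Xs 0 → (∀ i : Fin n, Ξs i) → Xs k)
    (hΦ0 : ∀ x ξ, Φ 0 x ξ = x) (hΨ0 : ∀ x ξ, Ψ 0 x ξ = x)
    (hΦs : ∀ (k : ℕ) (hk : k < n) x ξ, Φ (k + 1) x ξ = φ k (Φ k x ξ) (ξ ⟨k, hk⟩))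
    (hΨs : ∀ (k : ℕ) (hk : k < n) x ξ, Ψ (k + 1) x ξ = ψ k (Ψ k x ξ) (ξ ⟨k, hk⟩))
    -- the composite operator `T = S ∘ R` is a well-defined bounded linear operator
    (T : Lp (Xs n) 2 μX →L[ℂ] Lp (Xs n) 2 μX)
    (hT : ∀ f : Lp (Xs n) 2 μX,
      ⇑(T f) =ᵐ[μX] fun x =>
        ∫ ξ : ∀ i : Fin n, Ξs i,
          (∫ x', (inner ℂ (f x') (Ψ n x' ξ) : ℂ) ∂μX) • Φ n x ξ
            ∂(Measure.pi fun i : Fin n => μΞ i))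
    -- the unitary representation `π` of `G` on `L²(X;Y)`
    (Pi : G →* (Lp (Xs n) 2 μX ≃ₗᵢ[ℂ] Lp (Xs n) 2 μX))
    (hPi : ∀ (g : G) (f : Lp (Xs n) 2 μX),
      ⇑(Pi g f) =ᵐ[μX] fun x => g • (f (g⁻¹ • x)))
    -- irreducibility of `π`
    (hirr : ∀ V : Submodule ℂ (Lp (Xs n) 2 μX), IsClosed (V : Set (Lp (Xs n) 2 μX)) →
      (∀ (g : G) (f : Lp (Xs n) 2 μX), f ∈ V → Pi g f ∈ V) → V = ⊥ ∨ V = ⊤) :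
    ∃ C : ℂ, ∀ f : Lp (Xs n) 2 μX, T f = C • f := by
  have : MeasurableConstSMul G (Xs 0) := ⟨fun g => (hμX g).measurable⟩
  have := smulInvariantMeasure_of_measurePreserving hμX
  have : ∀ i, MeasurableConstSMul G (Ξs i) := fun i => ⟨fun g => (hμΞ i g).measurable⟩
  have := smulInvariantMeasure_of_measurePreserving fun g : G =>
    measurePreserving_pi (fun i : Fin n => μΞ i) _ fun i => hμΞ i g
  have hΦn (g : G) x ξ : Φ n (g • x) (g • ξ) = (ρ g).toLinearIsometry (Φ n x ξ) := by
    rw [composite_smul_smul hφ hΦ0 hΦs g le_rfl, hρ]; rfl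
  have hΨn (g : G) x ξ : Ψ n (g • x) (g • ξ) = (ρ g).toLinearIsometry (Ψ n x ξ) := by
    rw [composite_smul_smul hψ hΨ0 hΨs g le_rfl, hρ]; rfl
  have hPi' (g : G) (f : Lp (Xs n) 2 μX) :
      ⇑(Pi g f) =ᵐ[μX] fun x => (ρ g).toLinearIsometry (f (g⁻¹ • x)) := by
    simpa only [hρ, LinearIsometryEquiv.coe_toLinearIsometry] using hPi g f
  refine IsTopologicallyIrreducible.exists_eq_smul (U := fun g => Pi g) hirr
    (mem_commutant_iff.mpr fun g f => ?_)
  exact comm_of_ae_eq_machine_ridgelet _ (hΦn g) (hΨn g) T hT (Pi g) (hPi' g) f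

/-- **Deep ridgelet reconstruction.** Let `G` be a locally compact group,
`X₀, …, Xₙ` `G`-spaces with the data domain `X := X₀` carrying a `G`-invariant measure,
`Ξ₁, …, Ξₙ` `G`-spaces with `G`-invariant (σ-finite) measures, and `Y := Xₙ` a separable
Hilbert space on which `G` acts by a unitary representation `ρ`.  Let
`φᵢ, ψᵢ : X_{i-1} × Ξᵢ → Xᵢ` be joint-`G`-equivariant feature maps, `Φ`, `Ψ` the depth-`n`
compositions, `S[γ](x) = ∫ γ(ξ_{1:n}) • Φ(x, ξ_{1:n}) dξ_{1:n}` the deep machine and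
`R[f](ξ_{1:n}) = ∫ ⟨f(x), Ψ(x, ξ_{1:n})⟩ dx` the deep ridgelet transform.  If
`T = S ∘ R` is a well-defined bounded linear operator on `L²(X;Y)` and the representation
`π_g[f](x) = g • f(g⁻¹ • x)` on `L²(X;Y)` is irreducible, then there is `C ∈ ℂ` with
`S[R[f]] = C • f` for all `f ∈ L²(X;Y)`. -/
theorem statement7
    {G : Type*} [Group G] [TopologicalSpace G] [IsTopologicalGroup G]
    [LocallyCompactSpace G]
    (n : ℕ) (Xs : ℕ → Type*) (Ξs : ℕ → Type*)
    [∀ i, MulAction G (Xs i)] [∀ i, MulAction G (Ξs i)]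
    [MeasurableSpace (Xs 0)] (μX : Measure (Xs 0))
    (hμX : ∀ g : G, MeasurePreserving (fun x : Xs 0 => g • x) μX μX)
    [∀ i, MeasurableSpace (Ξs i)] (μΞ : ∀ i, Measure (Ξs i))
    [∀ i, SigmaFinite (μΞ i)]
    (hμΞ : ∀ (i : ℕ) (g : G), MeasurePreserving (fun ξ : Ξs i => g • ξ) (μΞ i) (μΞ i))
    [NormedAddCommGroup (Xs n)] [InnerProductSpace ℂ (Xs n)] [CompleteSpace (Xs n)]
    [TopologicalSpace.SeparableSpace (Xs n)]
    (ρ : G →* (Xs n ≃ₗᵢ[ℂ] Xs n))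
    (hρ : ∀ (g : G) (y : Xs n), g • y = ρ g y)
    (φ ψ : ∀ i : ℕ, Xs i → Ξs i → Xs (i + 1))
    (hφ : ∀ (i : ℕ) (g : G) (x : Xs i) (ξ : Ξs i), φ i (g • x) (g • ξ) = g • φ i x ξ)
    (hψ : ∀ (i : ℕ) (g : G) (x : Xs i) (ξ : Ξs i), ψ i (g • x) (g • ξ) = g • ψ i x ξ)
    -- the depth-n compositions `Φ = φ_{1:n}` and `Ψ = ψ_{1:n}`
    (Φ Ψ : ∀ k : ℕ, Xs 0 → (∀ i : Fin n, Ξs i) → Xs k)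
    (hΦ0 : ∀ x ξ, Φ 0 x ξ = x) (hΨ0 : ∀ x ξ, Ψ 0 x ξ = x)
    (hΦs : ∀ (k : ℕ) (hk : k < n) x ξ, Φ (k + 1) x ξ = φ k (Φ k x ξ) (ξ ⟨k, hk⟩))
    (hΨs : ∀ (k : ℕ) (hk : k < n) x ξ, Ψ (k + 1) x ξ = ψ k (Ψ k x ξ) (ξ ⟨k, hk⟩))
    -- the composite operator `T = S ∘ R` is a well-defined bounded linear operator
    (T : Lp (Xs n) 2 μX →L[ℂ] Lp (Xs n) 2 μX)
    (hT : ∀ f : Lp (Xs n) 2 μX,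
      ⇑(T f) =ᵐ[μX] fun x =>
        ∫ ξ : ∀ i : Fin n, Ξs i,
          (∫ x', (inner ℂ (f x') (Ψ n x' ξ) : ℂ) ∂μX) • Φ n x ξ
            ∂(Measure.pi fun i : Fin n => μΞ i))
    -- the unitary representation `π` of `G` on `L²(X;Y)`
    (Pi : G →* (Lp (Xs n) 2 μX ≃ₗᵢ[ℂ] Lp (Xs n) 2 μX))
    (hPi : ∀ (g : G) (f : Lp (Xs n) 2 μX),
      ⇑(Pi g f) =ᵐ[μX] fun x => g • (f (g⁻¹ • x)))
    -- irreducibility of `π`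
    (hirr : ∀ V : Submodule ℂ (Lp (Xs n) 2 μX), IsClosed (V : Set (Lp (Xs n) 2 μX)) →
      (∀ (g : G) (f : Lp (Xs n) 2 μX), f ∈ V → Pi g f ∈ V) → V = ⊥ ∨ V = ⊤) :
    ∃ C : ℂ, ∀ f : Lp (Xs n) 2 μX, T f = C • f :=
  statement7_general n Xs Ξs μX hμX μΞ hμΞ ρ hρ φ ψ hφ hψ Φ Ψ hΦ0 hΨ0 hΦs hΨs T hT Pi hPi hirr
end

section
/- Let T = ℝᵐ act on L²(ℝᵐ) by translations, τ_b[f](x) := f(x − b). A closed subspace V of L²(ℝᵐ) is invariant under all translations τ_b, b ∈ ℝᵐ, if and only if there exists a measurable set E ⊆ ℝᵐ such that V = F⁻¹[L²(E)], where F denotes the Fourier transform on L²(ℝᵐ) and L²(E) is the subspace of functions in L²(ℝᵐ) vanishing almost everywhere outside E. -/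
/-!
The Fourier transform turns the translation `τ_b` into the modulation `M_b`, multiplication by
`ξ ↦ e^{-2πi b·ξ}`, so `V` is translation invariant iff `W = F(V)` is invariant under all `M_b`.
Since `M_b* = M_{-b}`, the orthogonal projection `P` onto such a `W` commutes with every `M_b`;
hence `conj (P g) * h` and `conj g * P h` have the same Fourier transform, so they agree a.e. by
injectivity of the Fourier transform on `L¹`. Testing this against a nowhere vanishing `w ∈ L²`
shows that `P` is multiplication by `ψ = conj (P w) / conj w`, and `P² = P` forces `ψ² = ψ`:
`P` is multiplication by the indicator of `E = {ψ = 1}`.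
-/

open MeasureTheory Filter Complex
open scoped FourierTransform SchwartzMap ENNReal InnerProductSpace ComplexConjugate

noncomputable section

variable {m : ℕ}

def fourierKernel (b ξ : Fin m → ℝ) : ℂ := 𝐞 (-∑ i, b i * ξ i)

lemma fourierKernel_eq_exp (b ξ : Fin m → ℝ) :
    fourierKernel b ξ = cexp (-(2 * Real.pi * I) * ((∑ i, b i * ξ i : ℝ) : ℂ)) := by
  rw [fourierKernel, Real.fourierChar_apply]; push_cast; ring_nf

lemma norm_fourierKernel (b ξ : Fin m → ℝ) : ‖fourierKernel b ξ‖ = 1 := Circle.norm_coe _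

lemma fourierKernel_add_left (b c ξ : Fin m → ℝ) :
    fourierKernel (b + c) ξ = fourierKernel b ξ * fourierKernel c ξ := by
  simp only [fourierKernel, Pi.add_apply, add_mul, Finset.sum_add_distrib, neg_add,
    AddChar.map_add_eq_mul, Circle.coe_mul]

lemma conj_fourierKernel (b ξ : Fin m → ℝ) :
    conj (fourierKernel b ξ) = fourierKernel (-b) ξ := by
  simp [fourierKernel, ← Circle.coe_inv_eq_conj, ← AddChar.map_neg_eq_inv]

lemma continuous_fourierKernel (b : Fin m → ℝ) : Continuous (fourierKernel b) := by
  unfold fourierKernel; fun_prop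

lemma integrable_fourierKernel_mul {μ : Measure (Fin m → ℝ)} {k : (Fin m → ℝ) → ℂ}
    (hk : Integrable k μ) (b : Fin m → ℝ) : Integrable (fun ξ => fourierKernel b ξ * k ξ) μ :=
  hk.bdd_mul (continuous_fourierKernel b).aestronglyMeasurable
    (Eventually.of_forall fun ξ => (norm_fourierKernel b ξ).le)

section Modulation

variable {μ : Measure (Fin m → ℝ)} {p : ℝ≥0∞}

lemma memLp_fourierKernel_mul (b : Fin m → ℝ) (f : Lp ℂ p μ) :
    MemLp (fun ξ => fourierKernel b ξ * f ξ) p μ :=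
  (Lp.memLp f).of_le ((continuous_fourierKernel b).aestronglyMeasurable.mul
    (Lp.aestronglyMeasurable f)) (Eventually.of_forall fun ξ => by simp [norm_fourierKernel])

variable [Fact (1 ≤ p)]

def modulation (b : Fin m → ℝ) : Lp ℂ p μ →ₗᵢ[ℂ] Lp ℂ p μ where
  toFun f := (memLp_fourierKernel_mul b f).toLp
  map_add' f g := by
    ext1
    filter_upwards [MemLp.coeFn_toLp (memLp_fourierKernel_mul b (f + g)),
      MemLp.coeFn_toLp (memLp_fourierKernel_mul b f),
      MemLp.coeFn_toLp (memLp_fourierKernel_mul b g), Lp.coeFn_add f g,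
      Lp.coeFn_add (memLp_fourierKernel_mul b f).toLp (memLp_fourierKernel_mul b g).toLp]
      with ξ h₁ h₂ h₃ h₄ h₅
    simp only [h₁, h₄, h₅, Pi.add_apply, h₂, h₃, mul_add]
  map_smul' c f := by
    ext1
    filter_upwards [MemLp.coeFn_toLp (memLp_fourierKernel_mul b (c • f)),
      MemLp.coeFn_toLp (memLp_fourierKernel_mul b f), Lp.coeFn_smul c f,
      Lp.coeFn_smul c (memLp_fourierKernel_mul b f).toLp] with ξ h₁ h₂ h₃ h₄
    simp only [h₁, h₃, h₄, Pi.smul_apply, h₂, smul_eq_mul, RingHom.id_apply]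
    ring
  norm_map' f := by
    rw [LinearMap.coe_mk, AddHom.coe_mk, Lp.norm_toLp, Lp.norm_def]
    congr 1
    exact eLpNorm_congr_norm_ae (Eventually.of_forall fun ξ => by simp [norm_fourierKernel])

lemma coeFn_modulation (b : Fin m → ℝ) (f : Lp ℂ p μ) :
    ⇑(modulation b f) =ᵐ[μ] fun ξ => fourierKernel b ξ * f ξ :=
  MemLp.coeFn_toLp (memLp_fourierKernel_mul b f)

lemma integral_fourierKernel_mul_conj_mul (b : Fin m → ℝ) (u v : Lp ℂ 2 μ) :
    ∫ ξ, fourierKernel b ξ * (conj (u ξ) * v ξ) ∂μ = ⟪modulation (-b) u, v⟫_ℂ := by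
  rw [L2.inner_def]
  refine integral_congr_ae ?_
  filter_upwards [coeFn_modulation (-b) u] with ξ h
  rw [RCLike.inner_apply, h, map_mul, conj_fourierKernel, neg_neg]
  ring

lemma inner_modulation_left (b : Fin m → ℝ) (u v : Lp ℂ 2 μ) :
    ⟪modulation b u, v⟫_ℂ = ⟪u, modulation (-b) v⟫_ℂ := by
  rw [L2.inner_def, L2.inner_def]
  refine integral_congr_ae ?_
  filter_upwards [coeFn_modulation b u, coeFn_modulation (-b) v] with ξ h₁ h₂
  rw [RCLike.inner_apply, RCLike.inner_apply, h₁, h₂, map_mul, conj_fourierKernel]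
  ring

end Modulation

section Translation

variable {p : ℝ≥0∞} [Fact (1 ≤ p)]

def translation (b : Fin m → ℝ) :
    Lp ℂ p (volume : Measure (Fin m → ℝ)) →ₗᵢ[ℂ] Lp ℂ p (volume : Measure (Fin m → ℝ)) :=
  Lp.compMeasurePreservingₗᵢ ℂ (· - b) (measurePreserving_sub_right _ b)

lemma coeFn_translation (b : Fin m → ℝ) (f : Lp ℂ p (volume : Measure (Fin m → ℝ))) :
    ⇑(translation b f) =ᵐ[volume] fun x => f (x - b) :=
  Lp.coeFn_compMeasurePreserving f _

lemma eq_translation_iff (b : Fin m → ℝ) (f h : Lp ℂ p (volume : Measure (Fin m → ℝ))) :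
    h = translation b f ↔ ⇑h =ᵐ[volume] fun x => f (x - b) := by
  rw [Lp.ext_iff]
  exact ⟨fun hh => hh.trans (coeFn_translation b f),
    fun hh => hh.trans (coeFn_translation b f).symm⟩

end Translation

lemma integral_fourierKernel_mul_comp_sub (f : (Fin m → ℝ) → ℂ) (b ξ : Fin m → ℝ) :
    ∫ x, fourierKernel x ξ * f (x - b) = fourierKernel b ξ * ∫ x, fourierKernel x ξ * f x := by
  rw [← integral_add_right_eq_self _ b, ← integral_const_mul]
  simp only [add_sub_cancel_right, fourierKernel_add_left]
  congr 1 with x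
  ring

theorem MeasureTheory.Lp.eq_of_forall_integrable {α E X : Type*} [MeasurableSpace α]
    {μ : Measure α} [NormedAddCommGroup E] {p : ℝ≥0∞} [Fact (1 ≤ p)] (hp : p ≠ ∞)
    [TopologicalSpace X] [T2Space X] {A B : Lp E p μ → X} (hA : Continuous A) (hB : Continuous B)
    (h : ∀ f : Lp E p μ, Integrable f μ → A f = B f) : A = B := by
  refine hA.ext_on (Lp.simpleFunc.denseRange hp) hB ?_
  rintro _ ⟨s, rfl⟩
  refine h _ (Integrable.congr ?_ (Lp.simpleFunc.toSimpleFunc_eq_toFun s))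
  exact (SimpleFunc.memLp_iff_integrable (zero_lt_one.trans_le Fact.out).ne' hp).mp
    (Lp.simpleFunc.memLp s)

theorem fourier_translation_eq_modulation
    (F : Lp ℂ 2 (volume : Measure (Fin m → ℝ)) ≃ₗᵢ[ℂ] Lp ℂ 2 (volume : Measure (Fin m → ℝ)))
    (hF : ∀ f : Lp ℂ 2 (volume : Measure (Fin m → ℝ)), Integrable f volume →
      ⇑(F f) =ᵐ[volume] fun ξ => ∫ x, fourierKernel x ξ * f x)
    (b : Fin m → ℝ) (f : Lp ℂ 2 (volume : Measure (Fin m → ℝ))) :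
    F (translation b f) = modulation b (F f) := by
  revert f
  refine funext_iff.mp (Lp.eq_of_forall_integrable ENNReal.ofNat_ne_top
    (F.continuous.comp (translation b).continuous) ((modulation b).continuous.comp F.continuous)
    fun f hf => ?_)
  have hτf : Integrable (translation b f) volume :=
    ((measurePreserving_sub_right volume b).integrable_comp_emb
      (MeasurableEquiv.subRight b).measurableEmbedding |>.mpr hf).congr (coeFn_translation b f).symm
  ext1
  filter_upwards [hF _ hτf, hF f hf, coeFn_modulation b (F f)] with ξ h₁ h₂ h₃
  simp only [h₁, h₃, h₂, ← integral_fourierKernel_mul_comp_sub]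
  refine integral_congr_ae ?_
  filter_upwards [coeFn_translation b f] with x hx
  rw [hx]

section FourierUniqueness

variable {V E : Type*} [NormedAddCommGroup V] [InnerProductSpace ℝ V] [FiniteDimensional ℝ V]
  [MeasurableSpace V] [BorelSpace V] [NormedAddCommGroup E] [NormedSpace ℂ E] [CompleteSpace E]

theorem ae_eq_zero_of_fourier_eq_zero {k : V → E} (hk : Integrable k) (h : 𝓕 k = 0) :
    k =ᵐ[volume] 0 := by
  refine ae_eq_zero_of_integral_contDiff_smul_eq_zero hk.locallyIntegrable fun g hg hgc => ?_
  set φ : 𝓢(V, ℂ) := 𝓕⁻ ((hgc.comp_left ofReal_zero).toSchwartzMap (ofRealCLM.contDiff.comp hg))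
  have hφ : 𝓕 (φ : V → ℂ) = fun x => (g x : ℂ) := by
    rw [← SchwartzMap.fourier_coe, FourierInvPair.fourier_fourierInv_eq]; rfl
  calc ∫ x, g x • k x = ∫ x, 𝓕 (φ : V → ℂ) x • k x := by simp [hφ, Complex.coe_smul]
    _ = ∫ x, φ x • 𝓕 k x := by
          simpa using! VectorFourier.integral_fourierIntegral_smul_eq_flip (L := innerₗ V)
            Real.continuous_fourierChar continuous_inner φ.integrable hk
    _ = 0 := by simp [h]

end FourierUniqueness

theorem ae_eq_zero_of_integral_fourierKernel_mul_eq_zero {k : (Fin m → ℝ) → ℂ}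
    (hk : Integrable k) (h : ∀ b, ∫ ξ, fourierKernel b ξ * k ξ = 0) : k =ᵐ[volume] 0 := by
  have hofLp := EuclideanSpace.volume_preserving_symm_measurableEquiv_toLp (Fin m)
  have hkE : Integrable (k ∘ @WithLp.ofLp 2 (Fin m → ℝ)) :=
    (hofLp.integrable_comp_emb (MeasurableEquiv.measurableEmbedding _)).mpr hk
  have hFkE : 𝓕 (k ∘ @WithLp.ofLp 2 (Fin m → ℝ)) = 0 := by
    ext b
    rw [Real.fourier_eq, Pi.zero_apply, ← h b.ofLp, ← hofLp.integral_comp']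
    -- `⟪v, b⟫` on `EuclideanSpace` unfolds to `∑ i, b i * v i`
    rfl
  exact (PiLp.volume_preserving_toLp (Fin m)).quasiMeasurePreserving.ae_eq_comp
    (ae_eq_zero_of_fourier_eq_zero hkE hFkE)

theorem Submodule.starProjection_map_eq_map_starProjection {𝕜 E : Type*} [RCLike 𝕜]
    [NormedAddCommGroup E] [InnerProductSpace 𝕜 E] (K : Submodule 𝕜 E) [K.HasOrthogonalProjection]
    (T : E →ₗ[𝕜] E) (hK : ∀ v ∈ K, T v ∈ K) (hKperp : ∀ v ∈ Kᗮ, T v ∈ Kᗮ) (v : E) :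
    K.starProjection (T v) = T (K.starProjection v) :=
  K.eq_starProjection_of_mem_orthogonal (hK _ (K.starProjection_apply_mem v))
    (by rw [← map_sub]; exact hKperp _ (K.sub_starProjection_mem_orthogonal v))

section Projection

variable {α : Type*} [MeasurableSpace α] {μ : Measure α}

lemma integrable_conj_mul (u v : Lp ℂ 2 μ) : Integrable (fun x => conj (u x) * v x) μ := by
  simpa [RCLike.inner_apply, mul_comm] using L2.integrable_inner (𝕜 := ℂ) u v

lemma exists_Lp_two_ae_ne_zero [SigmaFinite μ] : ∃ w : Lp ℂ 2 μ, ∀ᵐ x ∂μ, w x ≠ 0 := by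
  obtain ⟨g, hg_pos, hg_meas, hg_int⟩ := exists_pos_lintegral_lt_of_sigmaFinite μ one_ne_zero
  have hw_meas : Measurable fun x => (Real.sqrt (g x) : ℂ) := by fun_prop
  have hw : MemLp (fun x => (Real.sqrt (g x) : ℂ)) 2 μ := by
    rw [memLp_two_iff_integrable_sq_norm hw_meas.aestronglyMeasurable]
    refine (integrable_toReal_of_lintegral_ne_top (by fun_prop) hg_int.ne_top).congr
      (Eventually.of_forall fun x => ?_)
    simp [Real.sq_sqrt (g x).coe_nonneg]
  refine ⟨hw.toLp, hw.coeFn_toLp.mono fun x hx => ?_⟩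
  simpa [hx] using (hg_pos x).ne'

variable (W : Submodule ℂ (Lp ℂ 2 μ)) [W.HasOrthogonalProjection]

theorem exists_idempotent_multiplier_of_conj_starProjection_mul [SigmaFinite μ]
    (hW : ∀ g h : Lp ℂ 2 μ, (fun x => conj (W.starProjection g x) * h x) =ᵐ[μ]
      fun x => conj (g x) * W.starProjection h x) :
    ∃ ψ : α → ℂ, Measurable ψ ∧ (∀ᵐ x ∂μ, ψ x = 0 ∨ ψ x = 1) ∧
      ∀ g : Lp ℂ 2 μ, ⇑(W.starProjection g) =ᵐ[μ] fun x => ψ x * g x := by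
  obtain ⟨w, hw⟩ := exists_Lp_two_ae_ne_zero (μ := μ)
  set ψ : α → ℂ := fun x => conj (W.starProjection w x) / conj (w x)
  have hψ : ∀ g : Lp ℂ 2 μ, ⇑(W.starProjection g) =ᵐ[μ] fun x => ψ x * g x := fun g => by
    filter_upwards [hW w g, hw] with x hx hwx
    rw [div_mul_eq_mul_div, hx, mul_div_cancel_left₀ _ ((map_ne_zero _).mpr hwx)]
  refine ⟨ψ, by fun_prop, ?_, hψ⟩
  have hPPw := (W.starProjection_eq_self_iff).mpr (W.starProjection_apply_mem w)
  filter_upwards [hψ (W.starProjection w), hψ w, hw] with x h₁ h₂ hwx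
  rw [hPPw, h₂] at h₁
  have : ψ x * (ψ x - 1) * w x = 0 := by linear_combination -h₁
  simpa [hwx, sub_eq_zero] using this

theorem exists_measurableSet_mem_iff_of_conj_starProjection_mul [SigmaFinite μ]
    (hW : ∀ g h : Lp ℂ 2 μ, (fun x => conj (W.starProjection g x) * h x) =ᵐ[μ]
      fun x => conj (g x) * W.starProjection h x) :
    ∃ E : Set α, MeasurableSet E ∧ ∀ g : Lp ℂ 2 μ, g ∈ W ↔ ∀ᵐ x ∂μ, x ∉ E → g x = 0 := by
  obtain ⟨ψ, hψ_meas, hψ01, hψ⟩ := exists_idempotent_multiplier_of_conj_starProjection_mul W hW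
  refine ⟨ψ ⁻¹' {1}, hψ_meas (measurableSet_singleton 1), fun g => ?_⟩
  rw [← W.starProjection_eq_self_iff, Lp.ext_iff]
  refine ⟨fun h => ?_, fun h => ?_⟩
  · filter_upwards [(hψ g).symm.trans h, hψ01] with x hx h01 hxE
    simpa [h01.resolve_right hxE] using hx.symm
  · filter_upwards [hψ g, hψ01, h] with x hx h01 hxE
    rcases h01 with h0 | h1
    · simp [hx, h0, hxE (by simp [h0])]
    · simp [hx, h1]

end Projection

section ModulationInvariant

variable {μ : Measure (Fin m → ℝ)} (W : Submodule ℂ (Lp ℂ 2 μ))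

lemma modulation_mem_orthogonal (hW : ∀ b, ∀ g ∈ W, modulation b g ∈ W) (b : Fin m → ℝ)
    {u : Lp ℂ 2 μ} (hu : u ∈ Wᗮ) : modulation b u ∈ Wᗮ := by
  rw [Submodule.mem_orthogonal] at hu ⊢
  intro g hg
  rw [← neg_neg b, ← inner_modulation_left]
  exact hu _ (hW _ g hg)

lemma starProjection_modulation [W.HasOrthogonalProjection]
    (hW : ∀ b, ∀ g ∈ W, modulation b g ∈ W) (b : Fin m → ℝ) (u : Lp ℂ 2 μ) :
    W.starProjection (modulation b u) = modulation b (W.starProjection u) :=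
  W.starProjection_map_eq_map_starProjection (modulation b).toLinearMap (hW b)
    (fun _ => modulation_mem_orthogonal W hW b) u

end ModulationInvariant

theorem conj_starProjection_mul_ae_eq_of_modulation_mem
    (W : Submodule ℂ (Lp ℂ 2 (volume : Measure (Fin m → ℝ)))) [W.HasOrthogonalProjection]
    (hW : ∀ b, ∀ g ∈ W, modulation b g ∈ W) (g h : Lp ℂ 2 (volume : Measure (Fin m → ℝ))) :
    (fun ξ => conj (W.starProjection g ξ) * h ξ) =ᵐ[volume]
      fun ξ => conj (g ξ) * W.starProjection h ξ := by
  have hint := integrable_conj_mul (W.starProjection g) h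
  have hint' := integrable_conj_mul g (W.starProjection h)
  suffices hzero : ∀ b, ∫ ξ, fourierKernel b ξ *
      (conj (W.starProjection g ξ) * h ξ - conj (g ξ) * W.starProjection h ξ) = 0 from
    (ae_eq_zero_of_integral_fourierKernel_mul_eq_zero (hint.sub hint') hzero).mono
      fun ξ hξ => sub_eq_zero.mp hξ
  intro b
  simp only [mul_sub]
  rw [integral_sub (integrable_fourierKernel_mul hint b) (integrable_fourierKernel_mul hint' b),
    integral_fourierKernel_mul_conj_mul, integral_fourierKernel_mul_conj_mul,
    ← starProjection_modulation W hW, Submodule.inner_starProjection_left_eq_right, sub_self]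

theorem exists_measurableSet_mem_iff_of_modulation_mem
    (W : Submodule ℂ (Lp ℂ 2 (volume : Measure (Fin m → ℝ)))) [W.HasOrthogonalProjection]
    (hW : ∀ b, ∀ g ∈ W, modulation b g ∈ W) :
    ∃ E : Set (Fin m → ℝ), MeasurableSet E ∧
      ∀ g : Lp ℂ 2 (volume : Measure (Fin m → ℝ)), g ∈ W ↔ ∀ᵐ ξ ∂volume, ξ ∉ E → g ξ = 0 :=
  exists_measurableSet_mem_iff_of_conj_starProjection_mul W
    (conj_starProjection_mul_ae_eq_of_modulation_mem W hW)

end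

/-- Let `T = ℝᵐ` act on `L²(ℝᵐ)` by translations
`τ_b[f](x) = f(x - b)`.  A closed subspace `V ⊆ L²(ℝᵐ)` is invariant under all
translations if and only if there is a measurable set `E ⊆ ℝᵐ` with `V = F⁻¹[L²(E)]`,
where `F` is the Fourier–Plancherel transform (a unitary operator on `L²(ℝᵐ)` agreeing
with the Fourier integral on integrable functions) and `L²(E)` is the set of `h ∈ L²(ℝᵐ)`
vanishing a.e. outside `E`. -/
theorem statement10 (m : ℕ)
    (F : Lp ℂ 2 (volume : Measure (Fin m → ℝ)) ≃ₗᵢ[ℂ]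
      Lp ℂ 2 (volume : Measure (Fin m → ℝ)))
    (hF : ∀ f : Lp ℂ 2 (volume : Measure (Fin m → ℝ)), Integrable (⇑f) volume →
      ⇑(F f) =ᵐ[volume] fun ξ : Fin m → ℝ =>
        ∫ x : Fin m → ℝ,
          Complex.exp (-(2 * (Real.pi : ℂ) * Complex.I) * ((∑ i, x i * ξ i : ℝ) : ℂ)) * f x)
    (V : Submodule ℂ (Lp ℂ 2 (volume : Measure (Fin m → ℝ))))
    (hclosed : IsClosed (V : Set (Lp ℂ 2 (volume : Measure (Fin m → ℝ))))) :
    (∀ (b : Fin m → ℝ) (f h : Lp ℂ 2 (volume : Measure (Fin m → ℝ))), f ∈ V →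
        (⇑h =ᵐ[volume] fun x => f (x - b)) → h ∈ V) ↔
      ∃ E : Set (Fin m → ℝ), MeasurableSet E ∧
        ∀ f : Lp ℂ 2 (volume : Measure (Fin m → ℝ)),
          f ∈ V ↔ ∀ᵐ ξ ∂(volume : Measure (Fin m → ℝ)), ξ ∉ E → F f ξ = 0 := by
  have hFτ : ∀ b f, F (translation b f) = modulation b (F f) :=
    fourier_translation_eq_modulation F fun f hf => by
      simpa only [fourierKernel_eq_exp] using hF f hf
  set W := V.comap F.symm.toLinearEquiv.toLinearMap
  have : CompleteSpace W := (hclosed.preimage F.symm.continuous).completeSpace_coe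
  constructor
  · intro hinv
    obtain ⟨E, hE, hWE⟩ := exists_measurableSet_mem_iff_of_modulation_mem W fun b g hg => by
      have hFτ' : F.symm (modulation b g) = translation b (F.symm g) := by
        rw [F.symm_apply_eq, hFτ, F.apply_symm_apply]
      simpa [W, hFτ'] using hinv b _ _ hg ((eq_translation_iff b _ _).mp rfl)
    exact ⟨E, hE, fun f => by simpa [W] using hWE (F f)⟩
  · rintro ⟨E, -, hV⟩ b f h hf hh
    rw [(eq_translation_iff b f h).mpr hh, hV, hFτ]
    filter_upwards [coeFn_modulation b (F f), (hV f).mp hf] with ξ h₁ h₂ hξ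
    rw [h₁, h₂ hξ, mul_zero]
end

section
/- Let σ : ℝ → ℂ be any function and define the depth-2 fully-connected feature map φ(x, (a,b)) := σ(a·x − b) for x ∈ ℝᵐ and (a,b) ∈ ℝᵐ × ℝ. Let the affine group G = Aff(m) = GL(m,ℝ) ⋉ ℝᵐ act on the data domain by (L,t)·x := Lx + t and on the parameter domain by the dual action (L,t)·(a,b) := (L^{−⊤}a, b + tᵀL^{−⊤}a). Then φ is joint-G-invariant: φ(g·x, g·(a,b)) = φ(x, (a,b)) for all g ∈ G, x ∈ ℝᵐ, (a,b) ∈ ℝᵐ × ℝ. -/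
open Matrix

/-- The depth-2 fully-connected feature map
`φ(x, (a,b)) = σ(a·x - b)` is joint-invariant for the affine group `Aff(m)` acting on
data by `(L,t)·x = Lx + t` and on parameters by the dual action
`(L,t)·(a,b) = (L⁻ᵀ a, b + tᵀ L⁻ᵀ a)`:
`φ(g·x, g·(a,b)) = φ(x, (a,b))`. -/
theorem statement12 (m : ℕ) (σ : ℝ → ℂ)
    (φ : (Fin m → ℝ) → (Fin m → ℝ) × ℝ → ℂ)
    (hφ : ∀ (x : Fin m → ℝ) (a : Fin m → ℝ) (b : ℝ), φ x (a, b) = σ (a ⬝ᵥ x - b)) :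
    ∀ (L : GL (Fin m) ℝ) (t : Fin m → ℝ) (x : Fin m → ℝ) (a : Fin m → ℝ) (b : ℝ),
      φ ((↑L : Matrix (Fin m) (Fin m) ℝ) *ᵥ x + t)
        ((↑L⁻¹ : Matrix (Fin m) (Fin m) ℝ)ᵀ *ᵥ a,
          b + t ⬝ᵥ ((↑L⁻¹ : Matrix (Fin m) (Fin m) ℝ)ᵀ *ᵥ a)) =
      φ x (a, b) := by
  intro L t x a b
  rw [hφ, hφ]
  congr 1
  have h : ((↑L⁻¹ : Matrix (Fin m) (Fin m) ℝ)ᵀ *ᵥ a) ⬝ᵥ ((↑L : Matrix (Fin m) (Fin m) ℝ) *ᵥ x)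
      = a ⬝ᵥ x := by
    rw [dotProduct_mulVec, mulVec_transpose, vecMul_vecMul]
    simp [Matrix.coe_units_inv, Matrix.nonsing_inv_mul _ (Matrix.isUnit_iff_isUnit_det _ |>.mp L.isUnit)]
  simp only [Matrix.coe_units_inv] at h
  simp [dotProduct_add, h, dotProduct_comm t]
end

section
/- Let σ : ℝ → ℝ be any function, let M be the set of m×m real symmetric matrices, and define the quadratic-form feature map φ(x, (A,b,c)) := σ(xᵀAx + xᵀb + c) for x ∈ ℝᵐ and (A,b,c) ∈ M × ℝᵐ × ℝ. Let the affine group G = Aff(m) act on the data domain by (t,L)·x := t + Lx and on the parameter domain by (t,L)·(A,b,c) := (L^{−⊤}AL⁻¹, L^{−⊤}b − 2L^{−⊤}AL⁻¹t, c + tᵀL^{−⊤}AL⁻¹t − tᵀL^{−⊤}b). Then φ is joint-G-invariant: φ(g·x, g·(A,b,c)) = φ(x, (A,b,c)) for all g ∈ G, x ∈ ℝᵐ, (A,b,c) ∈ M × ℝᵐ × ℝ. -/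
open Matrix

/-- The quadratic-form feature map
`φ(x, (A,b,c)) = σ(xᵀAx + xᵀb + c)` (with `A` symmetric) is joint-invariant for the
affine group `Aff(m)` acting on data by `(t,L)·x = t + Lx` and on parameters by
`(t,L)·(A,b,c) = (L⁻ᵀAL⁻¹, L⁻ᵀb - 2L⁻ᵀAL⁻¹t, c + tᵀL⁻ᵀAL⁻¹t - tᵀL⁻ᵀb)`:
`φ(g·x, g·(A,b,c)) = φ(x, (A,b,c))`. -/
theorem statement14 (m : ℕ) (σ : ℝ → ℝ)
    (φ : (Fin m → ℝ) → Matrix (Fin m) (Fin m) ℝ × (Fin m → ℝ) × ℝ → ℝ)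
    (hφ : ∀ (x : Fin m → ℝ) (A : Matrix (Fin m) (Fin m) ℝ) (b : Fin m → ℝ) (c : ℝ),
      φ x (A, b, c) = σ (x ⬝ᵥ (A *ᵥ x) + x ⬝ᵥ b + c)) :
    ∀ (A : Matrix (Fin m) (Fin m) ℝ), Aᵀ = A →
    ∀ (b : Fin m → ℝ) (c : ℝ) (t : Fin m → ℝ) (L : GL (Fin m) ℝ) (x : Fin m → ℝ),
      φ (t + (↑L : Matrix (Fin m) (Fin m) ℝ) *ᵥ x)
        ((↑L⁻¹ : Matrix (Fin m) (Fin m) ℝ)ᵀ * A * (↑L⁻¹ : Matrix (Fin m) (Fin m) ℝ),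
         (↑L⁻¹ : Matrix (Fin m) (Fin m) ℝ)ᵀ *ᵥ b -
           (2 : ℝ) • (((↑L⁻¹ : Matrix (Fin m) (Fin m) ℝ)ᵀ * A *
             (↑L⁻¹ : Matrix (Fin m) (Fin m) ℝ)) *ᵥ t),
         c + t ⬝ᵥ (((↑L⁻¹ : Matrix (Fin m) (Fin m) ℝ)ᵀ * A *
             (↑L⁻¹ : Matrix (Fin m) (Fin m) ℝ)) *ᵥ t) -
           t ⬝ᵥ ((↑L⁻¹ : Matrix (Fin m) (Fin m) ℝ)ᵀ *ᵥ b)) =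
      φ x (A, b, c) := by
  intro A hA b c t L x
  rw [hφ, hφ]
  congr 1
  set N : Matrix (Fin m) (Fin m) ℝ := ↑L⁻¹ with hN
  set K : Matrix (Fin m) (Fin m) ℝ := ↑L with hK
  have hNK : N * K = 1 := L.inv_mul
  have hcan : ∀ v : Fin m → ℝ, N *ᵥ (K *ᵥ v) = v := by
    intro v
    rw [Matrix.mulVec_mulVec, hNK, Matrix.one_mulVec]
  have key2 : ∀ v w : Fin m → ℝ, v ⬝ᵥ (Nᵀ *ᵥ w) = (N *ᵥ v) ⬝ᵥ w := by
    intro v w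
    rw [Matrix.dotProduct_mulVec, Matrix.vecMul_transpose]
  have hsym : ∀ v w : Fin m → ℝ, v ⬝ᵥ (A *ᵥ w) = w ⬝ᵥ (A *ᵥ v) := by
    intro v w
    rw [Matrix.dotProduct_mulVec, ← Matrix.mulVec_transpose, hA, dotProduct_comm]
  simp only [Matrix.mulVec_add, add_dotProduct, dotProduct_add,
    dotProduct_sub, dotProduct_smul, smul_eq_mul, ← Matrix.mulVec_mulVec,
    key2, hcan]
  rw [hsym x (N *ᵥ t)]
  ring
end

section
/- Let G be a locally compact group acting on spaces X₀, …, Xₙ by actions T, let φᵢ : X_{i−1} × Ξᵢ → Xᵢ be feature maps with G-convolutional versions φ^τᵢ(x, ξ)(g) := T_g[φᵢ(T_{g⁻¹}[x], ξ)], and define the depth-n G-convolutional feature map φ^τ_{1:n}(x, ξ_{1:n})(g) := φ^τₙ(·, ξₙ)(g) ∘ ⋯ ∘ φ^τ₁(x, ξ₁)(g) and the depth-n machine GCN[γ](x)(g) := ∫_{Ξ_{1:n}} γ(ξ_{1:n}) φ^τ_{1:n}(x, ξ_{1:n})(g) dξ_{1:n}. Let DNN[γ](x) := ∫_{Ξ_{1:n}}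 γ(ξ_{1:n}) φ_{1:n}(x, ξ_{1:n}) dξ_{1:n} be the corresponding (non-convolutional) deep machine with φ_{1:n}(x,ξ_{1:n}) := φₙ(·,ξₙ) ∘ ⋯ ∘ φ₁(x,ξ₁). Then for every g ∈ G, x ∈ X₀, and γ for which the integrals are defined, GCN[γ](x)(g) = τ_g[DNN[γ]](x), where τ_g[f](x) := T_g[f(T_{g⁻¹}[x])]. -/
open MeasureTheory

/-! Unwinding the recursion, the `G`-convolutional composition at `g` is the plain composition
conjugated by `g`: the inner factors `T_{g⁻¹} ∘ T_g` cancel. Since `T_g` is a continuous linear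
automorphism of the output space, it commutes with the Bochner integral. -/

section GroupAction

variable {G X : Type*} [Group G] (T : G → X → X)

theorem act_inv_act (hT1 : ∀ x, T 1 x = x) (hTmul : ∀ g h x, T (g * h) x = T g (T h x))
    (g : G) (x : X) : T g⁻¹ (T g x) = x := by
  rw [← hTmul, inv_mul_cancel, hT1]

theorem act_act_inv (hT1 : ∀ x, T 1 x = x) (hTmul : ∀ g h x, T (g * h) x = T g (T h x))
    (g : G) (x : X) : T g (T g⁻¹ x) = x := by
  rw [← hTmul, mul_inv_cancel, hT1]

def boundedLinearActionEquiv [NormedAddCommGroup X] [NormedSpace ℝ X]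
    (hT1 : ∀ x, T 1 x = x) (hTmul : ∀ g h x, T (g * h) x = T g (T h x))
    (hTlin : ∀ g, IsBoundedLinearMap ℝ (T g)) (g : G) : X ≃L[ℝ] X :=
  ContinuousLinearEquiv.equivOfInverse (hTlin g).toContinuousLinearMap
    (hTlin g⁻¹).toContinuousLinearMap (act_inv_act T hT1 hTmul g) (act_act_inv T hT1 hTmul g)

theorem boundedLinearActionEquiv_apply [NormedAddCommGroup X] [NormedSpace ℝ X]
    (hT1 : ∀ x, T 1 x = x) (hTmul : ∀ g h x, T (g * h) x = T g (T h x))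
    (hTlin : ∀ g, IsBoundedLinearMap ℝ (T g)) (g : G) (x : X) :
    boundedLinearActionEquiv T hT1 hTmul hTlin g x = T g x :=
  rfl

end GroupAction

theorem convolutionalComp_eq_conj {G : Type*} [Group G] {n : ℕ} {Xs Ξs : ℕ → Type*}
    (T : ∀ i : ℕ, G → Xs i → Xs i)
    (hT1 : ∀ (i : ℕ) (x : Xs i), T i 1 x = x)
    (hTmul : ∀ (i : ℕ) (g h : G) (x : Xs i), T i (g * h) x = T i g (T i h x))
    (φ : ∀ i : ℕ, Xs i → Ξs i → Xs (i + 1))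
    (Φ : ∀ k : ℕ, Xs 0 → (∀ i : Fin n, Ξs i) → Xs k)
    (hΦ0 : ∀ x ξ, Φ 0 x ξ = x)
    (hΦs : ∀ (k : ℕ) (hk : k < n) x ξ, Φ (k + 1) x ξ = φ k (Φ k x ξ) (ξ ⟨k, hk⟩))
    (Φτ : ∀ k : ℕ, Xs 0 → (∀ i : Fin n, Ξs i) → G → Xs k)
    (hΦτ0 : ∀ x ξ g, Φτ 0 x ξ g = x)
    (hΦτs : ∀ (k : ℕ) (hk : k < n) x ξ g,
      Φτ (k + 1) x ξ g = T (k + 1) g (φ k (T k g⁻¹ (Φτ k x ξ g)) (ξ ⟨k, hk⟩)))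
    (x : Xs 0) (ξ : ∀ i : Fin n, Ξs i) (g : G) :
    ∀ k ≤ n, Φτ k x ξ g = T k g (Φ k (T 0 g⁻¹ x) ξ)
  | 0, _ => by rw [hΦτ0, hΦ0, act_act_inv (T 0) (hT1 0) (hTmul 0)]
  | k + 1, hk => by
    rw [hΦτs k hk, convolutionalComp_eq_conj T hT1 hTmul φ Φ hΦ0 hΦs Φτ hΦτ0 hΦτs x ξ g k (Nat.le_of_succ_le hk),
      act_inv_act (T k) (hT1 k) (hTmul k), hΦs k hk]

theorem statement17_general
    {G : Type*} [Group G]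
    (n : ℕ) (Xs : ℕ → Type*) (Ξs : ℕ → Type*)
    (T : ∀ i : ℕ, G → Xs i → Xs i)
    (hT1 : ∀ (i : ℕ) (x : Xs i), T i 1 x = x)
    (hTmul : ∀ (i : ℕ) (g h : G) (x : Xs i), T i (g * h) x = T i g (T i h x))
    [NormedAddCommGroup (Xs n)] [NormedSpace ℝ (Xs n)]
    (hTlin : ∀ g : G, IsBoundedLinearMap ℝ (T n g))
    (φ : ∀ i : ℕ, Xs i → Ξs i → Xs (i + 1))
    (Φ : ∀ k : ℕ, Xs 0 → (∀ i : Fin n, Ξs i) → Xs k)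
    (hΦ0 : ∀ x ξ, Φ 0 x ξ = x)
    (hΦs : ∀ (k : ℕ) (hk : k < n) x ξ, Φ (k + 1) x ξ = φ k (Φ k x ξ) (ξ ⟨k, hk⟩))
    (Φτ : ∀ k : ℕ, Xs 0 → (∀ i : Fin n, Ξs i) → G → Xs k)
    (hΦτ0 : ∀ x ξ g, Φτ 0 x ξ g = x)
    (hΦτs : ∀ (k : ℕ) (hk : k < n) x ξ g,
      Φτ (k + 1) x ξ g = T (k + 1) g (φ k (T k g⁻¹ (Φτ k x ξ g)) (ξ ⟨k, hk⟩)))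
    [MeasurableSpace (∀ i : Fin n, Ξs i)] (μP : Measure (∀ i : Fin n, Ξs i))
    (γ : (∀ i : Fin n, Ξs i) → ℝ) (g : G) (x : Xs 0) :
    ∫ ξ, γ ξ • Φτ n x ξ g ∂μP = T n g (∫ ξ, γ ξ • Φ n (T 0 g⁻¹ x) ξ ∂μP) := by
  set L := boundedLinearActionEquiv (T n) (hT1 n) (hTmul n) hTlin g
  have hconj (ξ) : γ ξ • Φτ n x ξ g = L (γ ξ • Φ n (T 0 g⁻¹ x) ξ) := by
    rw [convolutionalComp_eq_conj T hT1 hTmul φ Φ hΦ0 hΦs Φτ hΦτ0 hΦτs x ξ g n le_rfl,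
      L.map_smul, boundedLinearActionEquiv_apply]
  simp_rw [hconj]
  exact L.integral_comp_comm _

/-- Let a locally compact group `G` act on spaces `X₀, …, Xₙ` by
actions `T`, let `φᵢ : X_{i-1} × Ξᵢ → Xᵢ` be feature maps with `G`-convolutional
versions `φ^τᵢ(x, ξ)(g) = T_g[φᵢ(T_{g⁻¹}[x], ξ)]`, let `Φτ` be the depth-`n`
`G`-convolutional composition and `Φ` the plain depth-`n` composition.  Then for all
`g`, `x` and all `γ` for which the integrals are defined,
`GCN[γ](x)(g) = τ_g[DNN[γ]](x)`, i.e.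
`∫ γ(ξ) • Φτ(x, ξ)(g) dξ = T_g[∫ γ(ξ) • Φ(T_{g⁻¹}[x], ξ) dξ]`. -/
theorem statement17
    {G : Type*} [Group G] [TopologicalSpace G] [IsTopologicalGroup G]
    [LocallyCompactSpace G]
    (n : ℕ) (Xs : ℕ → Type*) (Ξs : ℕ → Type*)
    (T : ∀ i : ℕ, G → Xs i → Xs i)
    (hT1 : ∀ (i : ℕ) (x : Xs i), T i 1 x = x)
    (hTmul : ∀ (i : ℕ) (g h : G) (x : Xs i), T i (g * h) x = T i g (T i h x))
    [NormedAddCommGroup (Xs n)] [NormedSpace ℝ (Xs n)] [CompleteSpace (Xs n)]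
    (hTlin : ∀ g : G, IsBoundedLinearMap ℝ (T n g))
    (φ : ∀ i : ℕ, Xs i → Ξs i → Xs (i + 1))
    (Φ : ∀ k : ℕ, Xs 0 → (∀ i : Fin n, Ξs i) → Xs k)
    (hΦ0 : ∀ x ξ, Φ 0 x ξ = x)
    (hΦs : ∀ (k : ℕ) (hk : k < n) x ξ, Φ (k + 1) x ξ = φ k (Φ k x ξ) (ξ ⟨k, hk⟩))
    (Φτ : ∀ k : ℕ, Xs 0 → (∀ i : Fin n, Ξs i) → G → Xs k)
    (hΦτ0 : ∀ x ξ g, Φτ 0 x ξ g = x)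
    (hΦτs : ∀ (k : ℕ) (hk : k < n) x ξ g,
      Φτ (k + 1) x ξ g = T (k + 1) g (φ k (T k g⁻¹ (Φτ k x ξ g)) (ξ ⟨k, hk⟩)))
    [MeasurableSpace (∀ i : Fin n, Ξs i)] (μP : Measure (∀ i : Fin n, Ξs i))
    (γ : (∀ i : Fin n, Ξs i) → ℝ) (g : G) (x : Xs 0)
    (hint : Integrable (fun ξ => γ ξ • Φτ n x ξ g) μP) :
    ∫ ξ, γ ξ • Φτ n x ξ g ∂μP = T n g (∫ ξ, γ ξ • Φ n (T 0 g⁻¹ x) ξ ∂μP) :=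
  statement17_general n Xs Ξs T hT1 hTmul hTlin φ Φ hΦ0 hΦs Φτ hΦτ0 hΦτs μP γ g x
end
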